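/- Let Ω be homogeneous of degree zero on ℝⁿ, integrable on the unit sphere S^{n−1}, and have mean value zero on S^{n−1}. For t ∈ [1,2] and j ∈ ℤ define K_t^j(x) = 2^{−j} Ω(x)|x|^{−(n−1)} 𝟙_{2^{j−1}t < |x| ≤ 2^j t}(x). Then for every ξ ∈ ℝⁿ \ {0}, the Fourier transform satisfies |K̂_t^j(ξ)| ≤ C ‖Ω‖_{L¹(S^{n−1})} min{1, |2^j ξ|}, with C depending only on n. -/

import Mathlib

/-!
In polar coordinates `x = r ω` the weight `|x|^{-(n-1)}` of `K_t^j` cancels the Jacobian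
`r^{n-1}`, so `K_t^j` integrates like `Ω(ω) ⊗ 2^{-j} 𝟙_{(2^{j-1}t, 2^j t]}(r) dr`: hence
`∫ K_t^j = (t/2) ∫_{S^{n-1}} Ω = 0` and `‖K_t^j‖₁ = (t/2) ‖Ω‖_{L¹(S^{n-1})}`. The trivial bound
`|K̂(ξ)| ≤ ‖K‖₁` settles `|2^j ξ| ≥ 1`. Otherwise, as `∫ K = 0`, the phase `e^{-2πi x·ξ}` may be
replaced by `e^{-2πi x·ξ} - 1`, of size at most `2π |x| |ξ| ≤ 4π |2^j ξ|` on the support of `K`.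
-/

open MeasureTheory Metric Set
open scoped FourierTransform ENNReal

/-- The dyadic piece `K_t^j(x) = 2^{−j} Ω(x)|x|^{−(n−1)} 𝟙_{2^{j−1}t<|x|≤2^j t}` of the
Marcinkiewicz kernel. -/
noncomputable def stmt3K (n : ℕ) (Ω : EuclideanSpace ℝ (Fin n) → ℝ) (t : ℝ) (j : ℤ) :
    EuclideanSpace ℝ (Fin n) → ℝ :=
  fun x =>
    Set.indicator {y : EuclideanSpace ℝ (Fin n) |
        (2 : ℝ) ^ (j - 1) * t < ‖y‖ ∧ ‖y‖ ≤ (2 : ℝ) ^ j * t}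
      (fun y => (2 : ℝ) ^ (-j) * Ω y / ‖y‖ ^ ((n : ℝ) - 1)) x

open Real Module Measure
open scoped RealInnerProductSpace

theorem norm_fourierChar_sub_one_le (θ : ℝ) : ‖(𝐞 θ : ℂ) - 1‖ ≤ 2 * π * |θ| := by
  rw [fourierChar_apply, mul_comm, ← Real.norm_eq_abs]
  refine norm_exp_I_mul_ofReal_sub_one_le.trans_eq ?_
  rw [norm_mul, Real.norm_of_nonneg (by positivity)]

section Shell

variable {E : Type*} [NormedAddCommGroup E] [NormedSpace ℝ E] {Ω : E → ℝ}

theorem mul_fun_norm_comp_homeomorphUnitSphereProd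
    (hΩ : ∀ (x : E) (r : ℝ), 0 < r → Ω (r • x) = Ω x) (f : ℝ → ℝ) :
    (fun p : sphere (0 : E) 1 × Ioi (0 : ℝ) ↦ Ω p.1 * f p.2) ∘ homeomorphUnitSphereProd E =
      fun x : ({0}ᶜ : Set E) ↦ Ω x * f ‖(x : E)‖ := by
  funext ⟨x, hx⟩
  simp [hΩ x _ (inv_pos.2 (norm_pos_iff.2 hx))]

variable (E) in
noncomputable def shellKernel (Ω : E → ℝ) (c a b : ℝ) (x : E) : ℝ :=
  Ω x * (Ioc a b).indicator (fun r ↦ c / r ^ (finrank ℝ E - 1)) ‖x‖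

theorem abs_shellKernel (Ω : E → ℝ) {c : ℝ} (hc : 0 ≤ c) (a b : ℝ) (x : E) :
    |shellKernel E Ω c a b x| = shellKernel E (|Ω ·|) c a b x := by
  simp only [shellKernel, abs_mul]
  congr 1
  exact abs_of_nonneg (indicator_apply_nonneg fun _ ↦ div_nonneg hc (by positivity))

theorem norm_le_of_shellKernel_ne_zero {c a b : ℝ} {x : E}
    (hx : shellKernel E Ω c a b x ≠ 0) : ‖x‖ ≤ b := by
  by_contra h
  exact hx (by simp [shellKernel, indicator_of_notMem (fun hr : ‖x‖ ∈ Ioc a b ↦ h hr.2)])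

end Shell

theorem pow_mul_indicator_div_pow {a : ℝ} (ha : 0 ≤ a) (b c : ℝ) (m : ℕ) :
    (fun r ↦ r ^ m * (Ioc a b).indicator (fun r ↦ c / r ^ m) r) =
      (Ioc a b).indicator fun _ ↦ c := by
  funext r
  by_cases hr : r ∈ Ioc a b
  · simp [hr, mul_div_cancel₀ _ (pow_ne_zero m (ha.trans_lt hr.1).ne')]
  · simp [hr]

theorem integral_volumeIoiPow (m : ℕ) (f : ℝ → ℝ) :
    ∫ r : Ioi (0 : ℝ), f r ∂volumeIoiPow m = ∫ r in Ioi 0, r ^ m * f r := by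
  rw [volumeIoiPow, ← integral_subtype_comap measurableSet_Ioi]
  simp only [ENNReal.ofReal]
  rw [integral_withDensity_eq_integral_smul (measurable_subtype_coe.pow_const _).real_toNNReal]
  refine congrArg _ (funext fun r ↦ ?_)
  rw [NNReal.smul_def, Real.coe_toNNReal _ (pow_nonneg r.2.out.le _), smul_eq_mul]

theorem integrable_volumeIoiPow_iff (m : ℕ) (f : ℝ → ℝ) :
    Integrable (fun r : Ioi (0 : ℝ) ↦ f r) (volumeIoiPow m) ↔
      IntegrableOn (fun r ↦ r ^ m * f r) (Ioi 0) := by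
  rw [volumeIoiPow, integrable_withDensity_iff_integrable_smul' (by fun_prop)
      (.of_forall fun _ ↦ ENNReal.ofReal_lt_top),
    integrableOn_iff_comap_subtypeVal measurableSet_Ioi]
  refine integrable_congr (.of_forall fun r ↦ ?_)
  simp [ENNReal.toReal_ofReal (pow_nonneg r.2.out.le _)]

section Polar

variable {E : Type*} [NormedAddCommGroup E] [NormedSpace ℝ E] [FiniteDimensional ℝ E]
  [Nontrivial E] [MeasurableSpace E] [BorelSpace E] {μ : Measure E} [μ.IsAddHaarMeasure]
  {Ω : E → ℝ}

theorem integrable_mul_fun_norm (hΩ : ∀ (x : E) (r : ℝ), 0 < r → Ω (r • x) = Ω x)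
    (hΩi : Integrable (fun ω : sphere (0 : E) 1 ↦ Ω ω) μ.toSphere) {f : ℝ → ℝ}
    (hf : IntegrableOn (fun r ↦ r ^ (finrank ℝ E - 1) * f r) (Ioi 0)) :
    Integrable (fun x ↦ Ω x * f ‖x‖) μ := by
  rw [← restrict_compl_singleton (μ := μ) 0, ← IntegrableOn,
    integrableOn_iff_comap_subtypeVal (measurableSet_singleton _).compl, Function.comp_def,
    ← mul_fun_norm_comp_homeomorphUnitSphereProd hΩ,
    μ.measurePreserving_homeomorphUnitSphereProd.integrable_comp_emb
      (Homeomorph.measurableEmbedding _)]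
  exact hΩi.mul_prod ((integrable_volumeIoiPow_iff _ f).2 hf)

theorem integral_mul_fun_norm (hΩ : ∀ (x : E) (r : ℝ), 0 < r → Ω (r • x) = Ω x) (f : ℝ → ℝ) :
    ∫ x, Ω x * f ‖x‖ ∂μ =
      (∫ ω, Ω ω ∂μ.toSphere) * ∫ r in Ioi 0, r ^ (finrank ℝ E - 1) * f r :=
  calc ∫ x, Ω x * f ‖x‖ ∂μ = ∫ x in {0}ᶜ, Ω x * f ‖x‖ ∂μ := by rw [restrict_compl_singleton]
    _ = ∫ x : ({0}ᶜ : Set E), Ω x * f ‖(x : E)‖ ∂μ.comap (↑) :=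
        (integral_subtype_comap (measurableSet_singleton _).compl _).symm
    _ = ∫ p, Ω p.1 * f p.2 ∂μ.toSphere.prod (volumeIoiPow (finrank ℝ E - 1)) := by
        rw [← mul_fun_norm_comp_homeomorphUnitSphereProd hΩ]
        exact μ.measurePreserving_homeomorphUnitSphereProd.integral_comp
          (Homeomorph.measurableEmbedding _) fun p : sphere (0 : E) 1 × Ioi (0 : ℝ) ↦ Ω p.1 * f p.2
    _ = _ := by
        rw [← integral_volumeIoiPow]
        exact integral_prod_mul (fun ω : sphere (0 : E) 1 ↦ Ω ω) (fun r : Ioi (0 : ℝ) ↦ f r)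

theorem integrable_shellKernel (hΩ : ∀ (x : E) (r : ℝ), 0 < r → Ω (r • x) = Ω x)
    (hΩi : Integrable (fun ω : sphere (0 : E) 1 ↦ Ω ω) μ.toSphere) {a : ℝ} (ha : 0 ≤ a)
    (b c : ℝ) : Integrable (shellKernel E Ω c a b) μ := by
  refine integrable_mul_fun_norm hΩ hΩi ?_
  rw [pow_mul_indicator_div_pow ha, IntegrableOn, integrable_indicator_iff measurableSet_Ioc]
  exact integrableOn_const measure_Ioc_lt_top.ne

theorem integral_shellKernel (hΩ : ∀ (x : E) (r : ℝ), 0 < r → Ω (r • x) = Ω x)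
    {a b : ℝ} (ha : 0 ≤ a) (hab : a ≤ b) (c : ℝ) :
    ∫ x, shellKernel E Ω c a b x ∂μ = c * (b - a) * ∫ ω, Ω ω ∂μ.toSphere := by
  simp only [shellKernel]
  rw [integral_mul_fun_norm hΩ, pow_mul_indicator_div_pow ha,
    integral_indicator measurableSet_Ioc, restrict_restrict measurableSet_Ioc,
    inter_eq_left.2 fun r (hr : r ∈ Ioc a b) ↦ mem_Ioi.2 (ha.trans_lt hr.1), setIntegral_const,
    volume_real_Ioc_of_le hab, smul_eq_mul]
  ring

end Polar

section Fourier

variable {E : Type*} [NormedAddCommGroup E] [InnerProductSpace ℝ E] [FiniteDimensional ℝ E]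
  [MeasurableSpace E] [BorelSpace E]

theorem norm_fourier_le_of_integral_eq_zero {f : E → ℂ} (hf : Integrable f)
    (hf₀ : ∫ x, f x = 0) {R : ℝ} (hR : ∀ x, f x ≠ 0 → ‖x‖ ≤ R) (ξ : E) :
    ‖𝓕 f ξ‖ ≤ 2 * π * R * ‖ξ‖ * ∫ x, ‖f x‖ := by
  have hsub : 𝓕 f ξ = ∫ x, ((𝐞 (-⟪x, ξ⟫) : ℂ) - 1) * f x := by
    rw [fourier_eq, ← sub_zero (∫ _, _), ← hf₀,
      ← integral_sub ((fourierIntegral_convergent_iff ξ).2 hf) hf]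
    simp only [Circle.smul_def, smul_eq_mul, sub_mul, one_mul]
  have hpt (x : E) : ‖((𝐞 (-⟪x, ξ⟫) : ℂ) - 1) * f x‖ ≤ 2 * π * R * ‖ξ‖ * ‖f x‖ := by
    rcases eq_or_ne (f x) 0 with hx | hx
    · simp [hx]
    rw [norm_mul]
    gcongr
    calc _ ≤ 2 * π * |-⟪x, ξ⟫| := norm_fourierChar_sub_one_le _
      _ ≤ 2 * π * (R * ‖ξ‖) := by
        rw [abs_neg]
        gcongr
        exact (abs_real_inner_le_norm x ξ).trans (by gcongr; exact hR x hx)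
      _ = _ := by ring
  rw [hsub, ← integral_const_mul]
  exact norm_integral_le_of_norm_le (hf.norm.const_mul _) (.of_forall hpt)

theorem norm_fourier_le_integral_norm_mul_min {f : E → ℂ} (hf : Integrable f)
    (hf₀ : ∫ x, f x = 0) {R : ℝ} (hR : ∀ x, f x ≠ 0 → ‖x‖ ≤ R) (ξ : E) :
    ‖𝓕 f ξ‖ ≤ (∫ x, ‖f x‖) * min 1 (2 * π * R * ‖ξ‖) := by
  rw [mul_min_of_nonneg _ _ (integral_nonneg fun _ ↦ norm_nonneg _), mul_one, mul_comm]
  exact le_min (VectorFourier.norm_fourierIntegral_le_integral_norm _ _ _ _ _)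
    (norm_fourier_le_of_integral_eq_zero hf hf₀ hR ξ)

variable [Nontrivial E] {Ω : E → ℝ}

theorem norm_fourier_shellKernel_le (hΩ : ∀ (x : E) (r : ℝ), 0 < r → Ω (r • x) = Ω x)
    (hΩi : Integrable (fun ω : sphere (0 : E) 1 ↦ Ω ω) volume.toSphere)
    (hΩ₀ : ∫ ω : sphere (0 : E) 1, Ω ω ∂volume.toSphere = 0) {a b c : ℝ} (ha : 0 ≤ a)
    (hab : a ≤ b) (hc : 0 ≤ c) (ξ : E) :
    ‖𝓕 (fun x ↦ (shellKernel E Ω c a b x : ℂ)) ξ‖ ≤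
      c * (b - a) * (∫ ω : sphere (0 : E) 1, |Ω ω| ∂volume.toSphere) *
        min 1 (2 * π * b * ‖ξ‖) := by
  have hK₀ : ∫ x, (shellKernel E Ω c a b x : ℂ) = 0 := by
    rw [integral_complex_ofReal, integral_shellKernel hΩ ha hab, hΩ₀, mul_zero,
      Complex.ofReal_zero]
  have hK₁ : ∫ x, ‖(shellKernel E Ω c a b x : ℂ)‖ =
      c * (b - a) * ∫ ω : sphere (0 : E) 1, |Ω ω| ∂volume.toSphere := by
    simp only [Complex.norm_real, Real.norm_eq_abs, abs_shellKernel Ω hc]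
    exact integral_shellKernel (fun x r hr ↦ by rw [hΩ x r hr]) ha hab c
  rw [← hK₁]
  exact norm_fourier_le_integral_norm_mul_min (integrable_shellKernel hΩ hΩi ha _ _).ofReal hK₀
    (fun x hx ↦ norm_le_of_shellKernel_ne_zero (Complex.ofReal_ne_zero.1 hx)) ξ

end Fourier

theorem stmt3K_eq_shellKernel {n : ℕ} (hn : n ≠ 0) (Ω : EuclideanSpace ℝ (Fin n) → ℝ)
    (t : ℝ) (j : ℤ) :
    stmt3K n Ω t j =
      shellKernel (EuclideanSpace ℝ (Fin n)) Ω (2 ^ (-j)) (2 ^ (j - 1) * t) (2 ^ j * t) := by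
  funext x
  have hpow : ‖x‖ ^ ((n : ℝ) - 1) = ‖x‖ ^ (finrank ℝ (EuclideanSpace ℝ (Fin n)) - 1) := by
    rw [finrank_euclideanSpace_fin, ← Real.rpow_natCast, Nat.cast_sub (by omega), Nat.cast_one]
  simp only [stmt3K, shellKernel, indicator, mem_ofPred_eq, mem_Ioc, hpow]
  split_ifs <;> ring

/-- Fourier transform estimate for the dyadic pieces of the Marcinkiewicz kernel:
if `Ω` is homogeneous of degree zero, integrable on the sphere, with mean value zero,
then `|K̂_t^j(ξ)| ≤ C ‖Ω‖_{L¹(S^{n−1})} min{1, |2^j ξ|}`. -/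
theorem stmt_3 (n : ℕ) (hn : 2 ≤ n) :
    ∃ C > (0 : ℝ), ∀ Ω : EuclideanSpace ℝ (Fin n) → ℝ,
      (∀ (x : EuclideanSpace ℝ (Fin n)) (r : ℝ), 0 < r → Ω (r • x) = Ω x) →
      Integrable (fun x : sphere (0 : EuclideanSpace ℝ (Fin n)) 1 => Ω ↑x)
        (volume : Measure (EuclideanSpace ℝ (Fin n))).toSphere →
      (∫ x : sphere (0 : EuclideanSpace ℝ (Fin n)) 1, Ω ↑x
          ∂(volume : Measure (EuclideanSpace ℝ (Fin n))).toSphere) = 0 →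
      ∀ t ∈ Set.Icc (1 : ℝ) 2, ∀ (j : ℤ) (ξ : EuclideanSpace ℝ (Fin n)), ξ ≠ 0 →
        ‖𝓕 (fun x => (stmt3K n Ω t j x : ℂ)) ξ‖ ≤
          C * (∫ x : sphere (0 : EuclideanSpace ℝ (Fin n)) 1, |Ω ↑x|
                ∂(volume : Measure (EuclideanSpace ℝ (Fin n))).toSphere) *
            min 1 ‖(2 : ℝ) ^ j • ξ‖ := by
  refine ⟨4 * π, by positivity, fun Ω hhom hΩ hΩ₀ t ht j ξ _ ↦ ?_⟩
  have : NeZero n := ⟨by omega⟩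
  obtain ⟨ht₁, ht₂⟩ := ht
  have hab : (2 : ℝ) ^ (j - 1) * t ≤ 2 ^ j * t := by gcongr <;> norm_num
  have hlen : (2 : ℝ) ^ (-j) * (2 ^ j * t - 2 ^ (j - 1) * t) = t / 2 := by
    rw [zpow_neg, zpow_sub₀ two_ne_zero, zpow_one]; field_simp; ring
  have hrad : 2 * π * (2 ^ j * t) * ‖ξ‖ ≤ 4 * π * ‖(2 : ℝ) ^ j • ξ‖ := by
    rw [norm_smul, Real.norm_of_nonneg (by positivity)]
    calc _ ≤ 2 * π * (2 ^ j * 2) * ‖ξ‖ := by gcongr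
      _ = _ := by ring
  rw [stmt3K_eq_shellKernel (by omega)]
  refine (norm_fourier_shellKernel_le hhom hΩ hΩ₀ (by positivity) hab (by positivity) ξ).trans ?_
  rw [hlen]
  set I := ∫ ω : sphere (0 : EuclideanSpace ℝ (Fin n)) 1, |Ω ω| ∂volume.toSphere
  calc t / 2 * I * min 1 (2 * π * (2 ^ j * t) * ‖ξ‖)
      ≤ 1 * I * min (4 * π * 1) (4 * π * ‖(2 : ℝ) ^ j • ξ‖) := by
        gcongr ?_ * _ * min ?_ ?_
        · linarith
        · linarith [pi_gt_three]
    _ = 4 * π * I * min 1 ‖(2 : ℝ) ^ j • ξ‖ := by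
        rw [← mul_min_of_nonneg _ _ (by positivity)]; ring
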